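/- Let η be an ordinal with η ∈ B(η), and for any ordinal β define β̂ := η + ω^(Ω+β). Then: (i) if α ∈ B(η+1) then α̂ ∈ B(α̂) and ψ(α̂) ∈ B(α̂+1); (ii) if α₀ ∈ B(η+1) and α₀ < α then ψ(α̂₀) < ψ(α̂). -/

import Mathlib

open Ordinal

/-- The derivative of a bounded family of normal functions (removed from Mathlib; old definition). -/
noncomputable def derivBFamily.{u, v} (o : Ordinal.{u}) (f : ∀ b < o, Ordinal.{max u v} → Ordinal.{max u v}) :
    Ordinal.{max u v} → Ordinal.{max u v} :=
  derivFamily (familyOfBFamily o f)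

/-- The binary Veblen function: `veblen 0 β = ω ^ β`, and for `α > 0`,
`veblen α` enumerates the common fixed points of `veblen γ` for `γ < α`. -/
noncomputable def veblen : Ordinal → Ordinal → Ordinal :=
  WellFounded.fix Ordinal.lt_wf
    (fun α ih => if α = 0 then fun β => omega0 ^ β
      else derivBFamily.{0,0} α (fun ξ h => ih ξ h))

/-- The set of strongly critical ordinals. -/
def StronglyCritical (γ : Ordinal) : Prop := _root_.veblen γ 0 = γ

/-- `Gamma β` is the `β`-th strongly critical ordinal. -/
noncomputable def Gamma : Ordinal → Ordinal :=
  enumOrd {γ | StronglyCritical γ}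

/-- The least uncountable cardinal (as an ordinal) greater than `θ`. -/
noncomputable def OmegaB (θ : Ordinal) : Ordinal :=
  sInf {o | θ < o ∧ o.card.ord = o ∧ Cardinal.aleph0 < o.card}

/-- Closure of `{0, Ω} ∪ {Γ_β : β ≤ θ}` under `+`, `veblen` and the
given partial collapsing function `f` on arguments below `α`. -/
def closB (θ α : Ordinal) (f : ∀ ξ, ξ < α → Ordinal) : Set Ordinal :=
  ⋂₀ {S : Set Ordinal |
      0 ∈ S ∧ OmegaB θ ∈ S ∧ (∀ β ≤ θ, Gamma β ∈ S) ∧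
      (∀ x ∈ S, ∀ y ∈ S, x + y ∈ S) ∧
      (∀ x ∈ S, ∀ y ∈ S, _root_.veblen x y ∈ S) ∧
      (∀ ξ (h : ξ < α), ξ ∈ S → f ξ h ∈ S)}

/-- The relativised collapsing function `ψ_θ`. -/
noncomputable def psiB (θ : Ordinal) : Ordinal → Ordinal :=
  WellFounded.fix Ordinal.lt_wf
    (fun α ih => sInf {β | β ∉ closB θ α (fun ξ h => ih ξ h)})

/-- The relativised collapsing hierarchy `B_θ(α)`. -/
def BB (θ α : Ordinal) : Set Ordinal :=
  closB θ α (fun ξ _ => psiB θ ξ)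

/-- The least strongly critical ordinal strictly above `δ`. -/
noncomputable def gammaSucc (δ : Ordinal) : Ordinal :=
  sInf {γ | δ < γ ∧ StronglyCritical γ}

/-! `ψ(α)` genuinely lies outside `B(α)` (it is not the junk value `sInf ∅ = 0`): `B(α)` is generated
from the small set `{0, Ω} ∪ {Γ_β : β ≤ θ}` in countably many rounds of applying `+`, `φ` and `ψ↾α`,
so it is small, hence bounded. Consequently `ψ` is monotone, and `ψ(α₀) < ψ(α)` as soon as `α₀ ≤ α`
and `ψ(α₀) ∈ B(α)`. The rest is closure bookkeeping: `η` and `ω^(Ω+α) = φ(0, Ω+α)` lie in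
`B(η+1) ⊆ B(α̂)`, so `α̂ ∈ B(α̂)` and `ψ(α̂) ∈ B(α̂+1)`; for (ii), `ψ(α̂₀) ∈ B(α̂₀+1) ⊆ B(α̂)`. -/

theorem veblen_zero_eq_opow (β : Ordinal) : _root_.veblen 0 β = ω ^ β := by
  rw [_root_.veblen, WellFounded.fix_eq]
  simp

universe u

theorem small_iUnion_iterate {β : Type*} (T : Set β → Set β)
    (hT : ∀ S : Set β, Small.{u} S → Small.{u} (T S)) (s : Set β) [Small.{u} s] :
    Small.{u} (⋃ n, T^[n] s) := by
  have hstage : ∀ n, Small.{u} (T^[n] s) := by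
    intro n
    induction n with
    | zero => assumption
    | succ n ih => rw [Function.iterate_succ_apply']; exact hT _ ih
  exact small_iUnion _

section Closure

variable {θ α : Ordinal} {f : ∀ ξ, ξ < α → Ordinal}

theorem closB_subset {S : Set Ordinal} (h0 : 0 ∈ S) (hΩ : OmegaB θ ∈ S)
    (hΓ : ∀ β ≤ θ, Gamma β ∈ S) (hadd : ∀ x ∈ S, ∀ y ∈ S, x + y ∈ S)
    (hveblen : ∀ x ∈ S, ∀ y ∈ S, _root_.veblen x y ∈ S) (hf : ∀ ξ (h : ξ < α), ξ ∈ S → f ξ h ∈ S) :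
    closB θ α f ⊆ S :=
  Set.sInter_subset_of_mem ⟨h0, hΩ, hΓ, hadd, hveblen, hf⟩

theorem zero_mem_closB : 0 ∈ closB θ α f :=
  Set.mem_sInter.2 fun _ hS => hS.1

theorem omegaB_mem_closB : OmegaB θ ∈ closB θ α f :=
  Set.mem_sInter.2 fun _ hS => hS.2.1

theorem gamma_mem_closB {β : Ordinal} (hβ : β ≤ θ) : Gamma β ∈ closB θ α f :=
  Set.mem_sInter.2 fun _ hS => hS.2.2.1 β hβ

theorem add_mem_closB {x y : Ordinal} (hx : x ∈ closB θ α f) (hy : y ∈ closB θ α f) :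
    x + y ∈ closB θ α f :=
  Set.mem_sInter.2 fun S hS => hS.2.2.2.1 x (hx S hS) y (hy S hS)

theorem veblen_mem_closB {x y : Ordinal} (hx : x ∈ closB θ α f) (hy : y ∈ closB θ α f) :
    _root_.veblen x y ∈ closB θ α f :=
  Set.mem_sInter.2 fun S hS => hS.2.2.2.2.1 x (hx S hS) y (hy S hS)

theorem apply_mem_closB {ξ : Ordinal} (h : ξ < α) (hξ : ξ ∈ closB θ α f) : f ξ h ∈ closB θ α f :=
  Set.mem_sInter.2 fun S hS => hS.2.2.2.2.2 ξ h (hξ S hS)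

def closBStep (α : Ordinal) (f : ∀ ξ, ξ < α → Ordinal) (S : Set Ordinal) : Set Ordinal :=
  S ∪ Set.image2 (· + ·) S S ∪ Set.image2 _root_.veblen S S ∪
    Set.range fun ξ : {ξ : Set.Iio α // ξ.1 ∈ S} => f ξ.1.1 ξ.1.2

theorem small_closBStep (S : Set Ordinal) [Small.{0} S] : Small.{0} (closBStep α f S) := by
  unfold closBStep
  infer_instance

theorem closB_subset_iUnion_closBStep :
    closB θ α f ⊆ ⋃ n, (closBStep α f)^[n] ({0, OmegaB θ} ∪ Gamma '' Set.Iic θ) := by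
  set stage := fun n => (closBStep α f)^[n] ({0, OmegaB θ} ∪ Gamma '' Set.Iic θ)
  have hsucc (n : ℕ) : stage (n + 1) = closBStep α f (stage n) :=
    Function.iterate_succ_apply' _ _ _
  have hmono : Monotone stage := monotone_nat_of_le_succ fun n => by
    rw [hsucc]
    exact fun x hx => Or.inl (Or.inl (Or.inl hx))
  have hpair {x y : Ordinal} (hx : x ∈ ⋃ n, stage n) (hy : y ∈ ⋃ n, stage n) :
      ∃ n, x ∈ stage n ∧ y ∈ stage n := by
    obtain ⟨m, hm⟩ := Set.mem_iUnion.1 hx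
    obtain ⟨n, hn⟩ := Set.mem_iUnion.1 hy
    exact ⟨max m n, hmono (le_max_left m n) hm, hmono (le_max_right m n) hn⟩
  have hseed : {0, OmegaB θ} ∪ Gamma '' Set.Iic θ ⊆ ⋃ n, stage n :=
    Set.subset_iUnion stage 0
  have hnext (n : ℕ) : closBStep α f (stage n) ⊆ ⋃ n, stage n :=
    hsucc n ▸ Set.subset_iUnion stage (n + 1)
  apply closB_subset
  · exact hseed (by simp)
  · exact hseed (by simp)
  · exact fun β hβ => hseed (Or.inr ⟨β, hβ, rfl⟩)
  · intro x hx y hy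
    obtain ⟨n, hxn, hyn⟩ := hpair hx hy
    exact hnext n (Or.inl (Or.inl (Or.inr ⟨x, hxn, y, hyn, rfl⟩)))
  · intro x hx y hy
    obtain ⟨n, hxn, hyn⟩ := hpair hx hy
    exact hnext n (Or.inl (Or.inr ⟨x, hxn, y, hyn, rfl⟩))
  · intro ξ h hξ
    obtain ⟨n, hξn⟩ := Set.mem_iUnion.1 hξ
    exact hnext n (Or.inr ⟨⟨⟨ξ, h⟩, hξn⟩, rfl⟩)

theorem bddAbove_closB : BddAbove (closB θ α f) :=
  have := small_iUnion_iterate (closBStep α f) (fun S _ => small_closBStep S)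
    ({0, OmegaB θ} ∪ Gamma '' Set.Iic θ)
  bddAbove_of_small.mono closB_subset_iUnion_closBStep

theorem exists_notMem_closB : ∃ β, β ∉ closB θ α f := by
  obtain ⟨b, hb⟩ := bddAbove_closB (θ := θ) (f := f)
  exact ⟨Order.succ b, fun h => (Order.lt_succ b).not_ge (hb h)⟩

end Closure

section Collapse

variable {θ : Ordinal}

theorem BB_mono {α α' : Ordinal} (h : α ≤ α') : BB θ α ⊆ BB θ α' :=
  closB_subset zero_mem_closB omegaB_mem_closB (fun _ hβ => gamma_mem_closB hβ)
    (fun _ hx _ hy => add_mem_closB hx hy) (fun _ hx _ hy => veblen_mem_closB hx hy)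
    fun _ hξ hmem => apply_mem_closB (f := fun ξ _ => psiB θ ξ) (hξ.trans_le h) hmem

theorem psiB_eq_sInf (α : Ordinal) : psiB θ α = sInf {β | β ∉ BB θ α} := by
  rw [psiB, WellFounded.fix_eq]
  rfl

theorem psiB_notMem_BB (α : Ordinal) : psiB θ α ∉ BB θ α := by
  rw [psiB_eq_sInf]
  exact csInf_mem exists_notMem_closB

theorem psiB_mono : Monotone (psiB θ) := fun _ _ h => by
  rw [psiB_eq_sInf, psiB_eq_sInf]
  exact csInf_le_csInf (OrderBot.bddBelow _) exists_notMem_closB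
    fun _ hβ hmem => hβ (BB_mono h hmem)

theorem psiB_lt_psiB_of_mem {α₀ α : Ordinal} (h : α₀ ≤ α) (hmem : psiB θ α₀ ∈ BB θ α) :
    psiB θ α₀ < psiB θ α :=
  (psiB_mono h).lt_of_ne fun heq => psiB_notMem_BB α (heq ▸ hmem)

theorem psiB_mem_BB_add_one {α : Ordinal} (h : α ∈ BB θ α) : psiB θ α ∈ BB θ (α + 1) :=
  apply_mem_closB (lt_add_one α) (BB_mono (lt_add_one α).le h)

theorem add_omega0_opow_mem_BB {η α : Ordinal} (hη : η ∈ BB θ η) (hα : α ∈ BB θ (η + 1)) :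
    η + ω ^ (OmegaB θ + α) ∈ BB θ (η + ω ^ (OmegaB θ + α)) := by
  have hpow : ω ^ (OmegaB θ + α) ∈ BB θ (η + 1) := by
    rw [← veblen_zero_eq_opow]
    exact veblen_mem_closB zero_mem_closB (add_mem_closB omegaB_mem_closB hα)
  have hle : η + 1 ≤ η + ω ^ (OmegaB θ + α) := by
    gcongr
    exact Order.one_le_iff_pos.2 (opow_pos _ omega0_pos)
  exact BB_mono hle (add_mem_closB (BB_mono le_self_add hη) hpow)

end Collapse

theorem stmt19 (θ η : Ordinal) (hη : η ∈ BB θ η) :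
    (∀ α, α ∈ BB θ (η + 1) →
        (η + Ordinal.omega0 ^ (OmegaB θ + α)) ∈ BB θ (η + Ordinal.omega0 ^ (OmegaB θ + α)) ∧
        psiB θ (η + Ordinal.omega0 ^ (OmegaB θ + α)) ∈ BB θ ((η + Ordinal.omega0 ^ (OmegaB θ + α)) + 1)) ∧
    (∀ α₀ α, α₀ ∈ BB θ (η + 1) → α₀ < α →
        psiB θ (η + Ordinal.omega0 ^ (OmegaB θ + α₀)) < psiB θ (η + Ordinal.omega0 ^ (OmegaB θ + α))) := by
  refine ⟨fun α hα => ⟨add_omega0_opow_mem_BB hη hα,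
    psiB_mem_BB_add_one (add_omega0_opow_mem_BB hη hα)⟩, fun α₀ α hα₀ hlt => ?_⟩
  have hhat : η + ω ^ (OmegaB θ + α₀) < η + ω ^ (OmegaB θ + α) := by
    gcongr
    exact (opow_lt_opow_iff_right one_lt_omega0).2 (by gcongr)
  exact psiB_lt_psiB_of_mem hhat.le <| BB_mono (Order.add_one_le_of_lt hhat) <|
    psiB_mem_BB_add_one (add_omega0_opow_mem_BB hη hα₀)
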